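/- arXiv:1303.5142 — 3 statements merged into one kernel-verified Lean document; each statement's English description precedes it below -/
import Mathlib

section
/- Let m ≥ 1, let Σ be an m×m real symmetric positive definite matrix with symmetric positive definite square root Σ^{1/2}, let t_1,…,t_m be real numbers, set t_{m+1} := 0 and c_i := t_i − t_{i+1}, and define φ : M_m(ℝ) → ℂ by φ(T) := ∏_{i=1}^m det(E_iᵀ(I_m − i·Σ^{1/2} T Σ^{1/2})E_i)^{−c_i}, using principal-branch complex powers. Let T be an m×m real matrix such that det(E_iᵀ(I_m − i·Σ^{1/2} T Σ^{1/2})E_i) does not lie in the closed negative real axis (−∞,0] for each i = 1,…,m. Then φ is Fréchet differentiable (over ℝ) at T, and its derivative satisfies Dφ(T)(H) = i·(∑_{i=1}^m c_i · tr(A_i H))·φ(T) for every H ∈ M_m(ℝ), where A_i := Σ^{1/2} E_i (E_iᵀ(I_m − i·Σ^{1/2} T Σ^{1/2})E_i)^{−1} E_iᵀ Σ^{1/2}. -/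
open MeasureTheory Matrix Finset

noncomputable section

/-- Measurable space structure on real matrices (the product σ-algebra). -/
instance matrixMeasurableSpace (m n : ℕ) : MeasurableSpace (Matrix (Fin m) (Fin n) ℝ) :=
  MeasurableSpace.pi

attribute [local instance] Matrix.normedAddCommGroup Matrix.normedSpace

/-- `nth κ j` is `κ j` when `j < m` and `0` otherwise. -/
def nth {m : ℕ} (κ : Fin m → ℕ) (j : ℕ) : ℕ := if h : j < m then κ ⟨j, h⟩ else 0

/-- Determinant of the `k × k` leading principal submatrix (for `k ≤ m`). -/
def lpm {R : Type*} [CommRing R] {m : ℕ} (A : Matrix (Fin m) (Fin m) R) (k : ℕ) : R :=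
  (Matrix.of fun r s : Fin (min k m) =>
    A (Fin.castLE (min_le_right k m) r) (Fin.castLE (min_le_right k m) s)).det

/-- The generalized power (highest weight vector)
`q_κ(A) = det(A)^{k_m} ∏_{i=1}^{m-1} det(A_i)^{k_i - k_{i+1}}`. -/
def gpow {R : Type*} [CommRing R] {m : ℕ} (κ : Fin m → ℕ) (A : Matrix (Fin m) (Fin m) R) : R :=
  ∏ i : Fin m, lpm A ((i : ℕ) + 1) ^ (nth κ (i : ℕ) - nth κ ((i : ℕ) + 1))

/-- Lebesgue measure on symmetric matrices: the pushforward of Lebesgue measure on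
`ℝ^{m(m+1)/2}` under the coordinates `(x_{ij})_{i ≤ j}`. -/
def symVolume (m : ℕ) : Measure (Matrix (Fin m) (Fin m) ℝ) :=
  Measure.map (fun x : ({p : Fin m × Fin m // p.1 ≤ p.2} → ℝ) =>
    Matrix.of fun i j => if h : i ≤ j then x ⟨(i, j), h⟩ else x ⟨(j, i), le_of_not_ge h⟩)
    volume

/-- The open cone of symmetric positive definite real matrices. -/
def PDcone (m : ℕ) : Set (Matrix (Fin m) (Fin m) ℝ) := {X | X.PosDef}

/-- The `m × k` matrix formed by the first `k` columns of the identity matrix. -/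
def Emat (R : Type*) [Zero R] [One R] (m k : ℕ) : Matrix (Fin m) (Fin k) R :=
  Matrix.of fun r c => if (r : ℕ) = (c : ℕ) then 1 else 0

/-- The generalized gamma function of weight `κ`:
`Γ_m[a, κ] = π^{m(m-1)/4} ∏_{i=1}^m Γ(a + k_i - (i-1)/2)`. -/
def GammaI (m : ℕ) (κ : Fin m → ℕ) (a : ℝ) : ℝ :=
  Real.pi ^ (((m * (m - 1) : ℕ) : ℝ) / 4) *
    ∏ i : Fin m, Real.Gamma (a + κ i - (i : ℝ) / 2)

/-- Kotz's generalized gamma function of weight `-κ`: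
`Γ_m[a, -κ] = π^{m(m-1)/4} ∏_{i=1}^m Γ(a - k_i - (m-i)/2)`. -/
def GammaII (m : ℕ) (κ : Fin m → ℕ) (a : ℝ) : ℝ :=
  Real.pi ^ (((m * (m - 1) : ℕ) : ℝ) / 4) *
    ∏ i : Fin m, Real.Gamma (a - κ i - ((m : ℝ) - 1 - (i : ℝ)) / 2)

/-- The Riesz type I density with parameters `(a, κ, Σ)`. -/
def densityI {m : ℕ} (κ : Fin m → ℕ) (Sig : Matrix (Fin m) (Fin m) ℝ) (a : ℝ)
    (X : Matrix (Fin m) (Fin m) ℝ) : ℝ :=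
  Real.exp (-((Sig⁻¹ * X).trace)) * X.det ^ (a - ((m : ℝ) + 1) / 2) * gpow κ X /
    (GammaI m κ a * Sig.det ^ a * gpow κ Sig)

/-- The Riesz type II density with parameters `(a, κ, Σ)`. -/
def densityII {m : ℕ} (κ : Fin m → ℕ) (Sig : Matrix (Fin m) (Fin m) ℝ) (a : ℝ)
    (X : Matrix (Fin m) (Fin m) ℝ) : ℝ :=
  Real.exp (-((Sig⁻¹ * X).trace)) * X.det ^ (a - ((m : ℝ) + 1) / 2) * gpow κ X⁻¹ /
    (GammaII m κ a * Sig.det ^ a * gpow κ Sig⁻¹)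

/-- Entrywise coercion of a real matrix to a complex matrix. -/
def cmat {m : ℕ} (A : Matrix (Fin m) (Fin m) ℝ) : Matrix (Fin m) (Fin m) ℂ :=
  A.map Complex.ofReal

/-- `nthR t j` is `t j` when `j < m` and `0` otherwise. -/
def nthR {m : ℕ} (t : Fin m → ℝ) (j : ℕ) : ℝ := if h : j < m then t ⟨j, h⟩ else 0

/-- The `k × k` leading principal submatrix `E_kᵀ M E_k` of a complex matrix. -/
def lpsub {m : ℕ} (M : Matrix (Fin m) (Fin m) ℂ) (k : ℕ) : Matrix (Fin k) (Fin k) ℂ :=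
  (Emat ℂ m k)ᵀ * M * Emat ℂ m k

/-- The complex matrix `I_m - i · Σ^{1/2} T Σ^{1/2}`. -/
def Rmat {m : ℕ} (Shalf T : Matrix (Fin m) (Fin m) ℝ) : Matrix (Fin m) (Fin m) ℂ :=
  1 - Complex.I • (cmat Shalf * cmat T * cmat Shalf)

/-- `A_i = Σ^{1/2} E_i (E_iᵀ (I_m - i Σ^{1/2} T Σ^{1/2}) E_i)⁻¹ E_iᵀ Σ^{1/2}`. -/
def Amat {m : ℕ} (Shalf T : Matrix (Fin m) (Fin m) ℝ) (i : Fin m) :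
    Matrix (Fin m) (Fin m) ℂ :=
  cmat Shalf * Emat ℂ m ((i : ℕ) + 1) * (lpsub (Rmat Shalf T) ((i : ℕ) + 1))⁻¹ *
    (Emat ℂ m ((i : ℕ) + 1))ᵀ * cmat Shalf

/-- The characteristic function of the Riesz type I distribution,
`φ(T) = ∏_i det(E_iᵀ (I - i Σ^{1/2} T Σ^{1/2}) E_i)^{-(t_i - t_{i+1})}`. -/
def phiI {m : ℕ} (Shalf : Matrix (Fin m) (Fin m) ℝ) (t : Fin m → ℝ)
    (T : Matrix (Fin m) (Fin m) ℝ) : ℂ :=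
  ∏ i : Fin m,
    (lpsub (Rmat Shalf T) ((i : ℕ) + 1)).det ^ ((-(t i - nthR t ((i : ℕ) + 1)) : ℝ) : ℂ)

/-- The characteristic function of the Riesz type II distribution,
`ψ(T) = ∏_i det(E_iᵀ (I - i Σ^{1/2} T Σ^{1/2}) E_i)^{(t_i - t_{i+1})}`. -/
def psiII {m : ℕ} (Shalf : Matrix (Fin m) (Fin m) ℝ) (t : Fin m → ℝ)
    (T : Matrix (Fin m) (Fin m) ℝ) : ℂ :=
  ∏ i : Fin m,
    (lpsub (Rmat Shalf T) ((i : ℕ) + 1)).det ^ (((t i - nthR t ((i : ℕ) + 1)) : ℝ) : ℂ)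

/-
Each factor of `φ` is `det(M_i(T))^{-c_i}` with `M_i(T) = E_iᵀ(I - i Σ^{1/2} T Σ^{1/2})E_i` affine
in `T`, with derivative `H ↦ -i E_iᵀ Σ^{1/2} H Σ^{1/2} E_i`. Jacobi's formula
`d det_M(D) = tr(adj M · D) = det M · tr(M⁻¹ D)` and the chain rule for the principal power
`z ↦ z^c`, which is holomorphic on the slit plane, show that the logarithmic derivative of the
factor is `H ↦ c_i · i · tr(M_i⁻¹ E_iᵀ Σ^{1/2} H Σ^{1/2} E_i) = i c_i tr(A_i H)` (cyclicity of the
trace). The logarithmic derivative of a product is the sum of those of its factors.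
-/

namespace Matrix

variable {n : Type*} [Fintype n] [DecidableEq n]

theorem sum_det_updateRow_eq_trace_adjugate_mul {R : Type*} [CommRing R] (M D : Matrix n n R) :
    ∑ i, (M.updateRow i (D i)).det = (M.adjugate * D).trace := by
  simp only [← cramer_transpose_apply, cramer_eq_adjugate_mulVec, ← adjugate_transpose, trace,
    diag_apply, mul_apply, mulVec, dotProduct, transpose_apply]
  exact Finset.sum_comm

theorem trace_inv_mul {K : Type*} [Field K] (M D : Matrix n n K) :
    (M⁻¹ * D).trace = M.det⁻¹ * (M.adjugate * D).trace := by
  rw [inv_def, Ring.inverse_eq_inv', smul_mul, trace_smul, smul_eq_mul]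

variable {𝕜 : Type*} [NontriviallyNormedField 𝕜]

def detRowContinuousMultilinearMap : ContinuousMultilinearMap 𝕜 (fun _ : n => n → 𝕜) 𝕜 :=
  { (detRowAlternating : (n → 𝕜) [⋀^n]→ₗ[𝕜] 𝕜).toMultilinearMap with
    cont := continuous_id.matrix_det }

theorem differentiable_det : Differentiable 𝕜 (det : Matrix n n 𝕜 → 𝕜) :=
  fun M => (detRowContinuousMultilinearMap.hasFDerivAt (fun i => M i)).differentiableAt

theorem fderiv_det_apply (M D : Matrix n n 𝕜) :
    fderiv 𝕜 det M D = (M.adjugate * D).trace := by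
  have h : fderiv 𝕜 (det : Matrix n n 𝕜 → 𝕜) M = _ :=
    (detRowContinuousMultilinearMap.hasFDerivAt (fun i => M i)).fderiv
  rw [h, ← sum_det_updateRow_eq_trace_adjugate_mul]
  exact ContinuousMultilinearMap.linearDeriv_apply _ _ _

end Matrix

section LogDeriv

variable {𝕜 E 𝔸 ι : Type*} [NontriviallyNormedField 𝕜] [NormedAddCommGroup E] [NormedSpace 𝕜 E]
  [NormedCommRing 𝔸] [NormedAlgebra 𝕜 𝔸] {x : E}

theorem exists_hasFDerivAt_finsetProd_of_logDeriv {u : Finset ι} {f : ι → E → 𝔸}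
    {L : ι → E →L[𝕜] 𝔸} (hf : ∀ i ∈ u, HasFDerivAt (f i) (f i x • L i) x) :
    ∃ L' : E →L[𝕜] 𝔸, HasFDerivAt (∏ i ∈ u, f i ·) L' x ∧
      ∀ h, L' h = (∏ i ∈ u, f i x) * ∑ i ∈ u, L i h := by
  classical
  refine ⟨(∏ i ∈ u, f i x) • ∑ i ∈ u, L i, (HasFDerivAt.finsetProd hf).congr_fderiv ?_,
    fun h => by simp⟩
  simp only [smul_smul, Finset.smul_sum]
  exact Finset.sum_congr rfl fun i hi => by rw [Finset.prod_erase_mul _ _ hi]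

end LogDeriv

section DetCpow

variable {E n : Type*} [NormedAddCommGroup E] [NormedSpace ℝ E] [Fintype n] [DecidableEq n]
  {x : E}

/- The value of `g'` enters through `G`: on matrices the default topology and the one induced by
the sup norm agree only up to unfolding, so applications `g' h` elaborated on the two sides need
not match syntactically. -/
theorem HasFDerivAt.exists_hasFDerivAt_det_cpow {g G : E → Matrix n n ℂ}
    {g' : E →L[ℝ] Matrix n n ℂ} (hg : HasFDerivAt g g' x) (hg' : ∀ h, g' h = G h)
    (hx : (g x).det ∈ Complex.slitPlane) (c : ℂ) :
    ∃ L : E →L[ℝ] ℂ, HasFDerivAt (fun y => (g y).det ^ c) ((g x).det ^ c • L) x ∧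
      ∀ h, L h = c * ((g x)⁻¹ * G h).trace := by
  have hdet := ((Matrix.differentiable_det (g x)).hasFDerivAt.restrictScalars ℝ).comp x hg
  have hcpow := (Complex.hasStrictDerivAt_cpow_const (c := c) hx).hasDerivAt.comp_hasFDerivAt x hdet
  refine ⟨(c * (g x).det⁻¹) • ((fderiv ℂ Matrix.det (g x)).restrictScalars ℝ).comp g',
    hcpow.congr_fderiv ?_, fun h => ?_⟩
  · rw [smul_smul, Complex.cpow_sub _ _ (Complex.slitPlane_ne_zero hx), Complex.cpow_one]
    congr 1
    field_simp
  · show c * (g x).det⁻¹ * fderiv ℂ Matrix.det (g x) (g' h) = _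
    rw [Matrix.fderiv_det_apply, hg', Matrix.trace_inv_mul]
    ring

end DetCpow

section RieszTypeI

variable {m : ℕ}

theorem cmat_add (A B : Matrix (Fin m) (Fin m) ℝ) : cmat (A + B) = cmat A + cmat B :=
  Matrix.map_add _ Complex.ofReal_add A B

theorem cmat_smul (r : ℝ) (A : Matrix (Fin m) (Fin m) ℝ) : cmat (r • A) = (r : ℂ) • cmat A :=
  Matrix.map_smul' _ r A Complex.ofReal_mul

def lpsubSandwich (S : Matrix (Fin m) (Fin m) ℝ) (k : ℕ) :
    Matrix (Fin m) (Fin m) ℝ →ₗ[ℝ] Matrix (Fin k) (Fin k) ℂ where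
  toFun H := lpsub (cmat S * cmat H * cmat S) k
  map_add' A B := by simp only [lpsub, cmat_add, Matrix.mul_add, Matrix.add_mul]
  map_smul' r A := by
    simp only [lpsub, cmat_smul, Matrix.mul_smul, Matrix.smul_mul, RingHom.id_apply]
    rfl

theorem exists_hasFDerivAt_lpsub_Rmat (S T : Matrix (Fin m) (Fin m) ℝ) (k : ℕ) :
    ∃ g' : Matrix (Fin m) (Fin m) ℝ →L[ℝ] Matrix (Fin k) (Fin k) ℂ,
      HasFDerivAt (fun T => lpsub (Rmat S T) k) g' T ∧
      ∀ H, g' H = -Complex.I • lpsub (cmat S * cmat H * cmat S) k := by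
  let g' := (-Complex.I) • LinearMap.toContinuousLinearMap (lpsubSandwich S k)
  have h_affine : (fun T => lpsub (Rmat S T) k) =
      fun T => lpsub (1 : Matrix (Fin m) (Fin m) ℂ) k + g' T := by
    funext T
    simp [g', Rmat, lpsub, lpsubSandwich, sub_eq_add_neg, Matrix.mul_add, Matrix.add_mul,
      Matrix.mul_smul, Matrix.smul_mul]
  exact ⟨g', h_affine ▸ g'.hasFDerivAt.const_add _, fun H => rfl⟩

theorem trace_Amat_mul (S T H : Matrix (Fin m) (Fin m) ℝ) (i : Fin m) :
    (Amat S T i * cmat H).trace =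
      ((lpsub (Rmat S T) (i + 1))⁻¹ * lpsub (cmat S * cmat H * cmat S) (i + 1)).trace := by
  simp only [Amat, lpsub, Matrix.mul_assoc]
  rw [Matrix.trace_mul_comm (cmat S), Matrix.mul_assoc, Matrix.trace_mul_comm (Emat ℂ m _)]
  simp only [Matrix.mul_assoc]

end RieszTypeI

theorem riesz_typeI_charfun_deriv_general {m : ℕ}
    (Shalf : Matrix (Fin m) (Fin m) ℝ)
    (t : Fin m → ℝ)
    (T : Matrix (Fin m) (Fin m) ℝ)
    (hT : ∀ i : Fin m, (lpsub (Rmat Shalf T) ((i : ℕ) + 1)).det ∈ Complex.slitPlane) :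
    ∃ L : Matrix (Fin m) (Fin m) ℝ →L[ℝ] ℂ,
      HasFDerivAt (phiI Shalf t) L T ∧
        ∀ H : Matrix (Fin m) (Fin m) ℝ,
          L H = Complex.I
              * (∑ i : Fin m, ((t i - nthR t ((i : ℕ) + 1) : ℝ) : ℂ)
                  * (Amat Shalf T i * cmat H).trace)
              * phiI Shalf t T := by
  choose g' hg' hg'_apply using exists_hasFDerivAt_lpsub_Rmat Shalf T
  choose L hL hL_apply using fun i : Fin m =>
    (hg' ((i : ℕ) + 1)).exists_hasFDerivAt_det_cpow (hg'_apply _) (hT i)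
      ((-(t i - nthR t ((i : ℕ) + 1)) : ℝ) : ℂ)
  obtain ⟨L', hL', hL'_apply⟩ := exists_hasFDerivAt_finsetProd_of_logDeriv fun i _ => hL i
  refine ⟨L', hL', fun H => (hL'_apply H).trans ?_⟩
  simp only [hL_apply, trace_Amat_mul, Matrix.mul_smul, Matrix.trace_smul, smul_eq_mul,
    Finset.mul_sum, Finset.sum_mul, phiI]
  refine Finset.sum_congr rfl fun i _ => ?_
  push_cast
  ring

/-- First Fréchet derivative of the characteristic function of the Riesz type I
distribution: `Dφ(T)(H) = i (∑_i (t_i - t_{i+1}) tr(A_i H)) φ(T)`. -/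
theorem riesz_typeI_charfun_deriv {m : ℕ} (hm : 1 ≤ m)
    (Sig Shalf : Matrix (Fin m) (Fin m) ℝ)
    (hSig : Sig.PosDef) (hShalf : Shalf.PosDef) (hShalf_symm : Shalf.IsSymm)
    (hsq : Shalf * Shalf = Sig)
    (t : Fin m → ℝ)
    (T : Matrix (Fin m) (Fin m) ℝ)
    (hT : ∀ i : Fin m, (lpsub (Rmat Shalf T) ((i : ℕ) + 1)).det ∈ Complex.slitPlane) :
    ∃ L : Matrix (Fin m) (Fin m) ℝ →L[ℝ] ℂ,
      HasFDerivAt (phiI Shalf t) L T ∧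
        ∀ H : Matrix (Fin m) (Fin m) ℝ,
          L H = Complex.I
              * (∑ i : Fin m, ((t i - nthR t ((i : ℕ) + 1) : ℝ) : ℂ)
                  * (Amat Shalf T i * cmat H).trace)
              * phiI Shalf t T :=
  riesz_typeI_charfun_deriv_general Shalf t T hT
end
end

section
/- Let m ≥ 1, let κ = (k_1,…,k_m) be integers with k_1 ≥ … ≥ k_m ≥ 0, let A be an arbitrary m×m matrix over a commutative ring, and let B be an m×m lower-triangular matrix over the same ring. Then the generalized power satisfies q_κ(B A Bᵀ) = q_κ(B Bᵀ) · q_κ(A). -/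
set_option maxRecDepth 4000


open Matrix Finset

noncomputable section

private lemma sum_trunc {R : Type*} [CommRing R] {m n : ℕ} (h : n ≤ m)
    (g : Fin m → R) (hg : ∀ i : Fin m, n ≤ (i : ℕ) → g i = 0) :
    ∑ i : Fin m, g i = ∑ i : Fin n, g (Fin.castLE h i) := by
  have h1 : ∑ i : Fin n, g (Fin.castLE h i)
      = ∑ i ∈ Finset.univ.image (Fin.castLE h), g i :=
    (Finset.sum_image (fun a _ b _ hab => Fin.castLE_injective h hab)).symm
  rw [h1]
  refine (Finset.sum_subset (Finset.subset_univ _) fun i _ hi => hg i ?_).symm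
  by_contra hlt
  push_neg at hlt
  exact hi (Finset.mem_image.2 ⟨⟨i, hlt⟩, Finset.mem_univ _, rfl⟩)

private lemma lpm_mul {R : Type*} [CommRing R] {m : ℕ}
    (A B : Matrix (Fin m) (Fin m) R)
    (hB : ∀ i j : Fin m, i < j → B i j = 0) (k : ℕ) :
    lpm (B * A * Bᵀ) k = lpm (B * Bᵀ) k * lpm A k := by
  have hnm : min k m ≤ m := min_le_right k m
  let f : Fin (min k m) → Fin m := Fin.castLE hnm
  let B' : Matrix (Fin (min k m)) (Fin (min k m)) R :=
    Matrix.of fun r s => B (f r) (f s)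
  let A' : Matrix (Fin (min k m)) (Fin (min k m)) R :=
    Matrix.of fun r s => A (f r) (f s)
  have hBf : ∀ (r : Fin (min k m)) (i : Fin m), min k m ≤ (i : ℕ) → B (f r) i = 0 := by
    intro r i hi
    exact hB _ _ (by simpa [Fin.lt_def, f] using lt_of_lt_of_le r.isLt hi)
  have hBAB : (Matrix.of fun r s : Fin (min k m) => (B * A * Bᵀ) (f r) (f s))
      = B' * A' * B'ᵀ := by
    ext r s
    show (B * A * Bᵀ) (f r) (f s)
        = ∑ j, (∑ i, B (f r) (f i) * A (f i) (f j)) * B (f s) (f j)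
    simp only [Matrix.mul_apply, Matrix.transpose_apply]
    rw [sum_trunc hnm _ (fun j hj => by rw [hBf s j hj, mul_zero])]
    refine Finset.sum_congr rfl fun j _ => ?_
    congr 1
    exact sum_trunc hnm _ (fun i hi => by rw [hBf r i hi, zero_mul])
  have hBB : (Matrix.of fun r s : Fin (min k m) => (B * Bᵀ) (f r) (f s))
      = B' * B'ᵀ := by
    ext r s
    show (B * Bᵀ) (f r) (f s) = ∑ j, B (f r) (f j) * B (f s) (f j)
    simp only [Matrix.mul_apply, Matrix.transpose_apply]
    exact sum_trunc hnm _ (fun j hj => by rw [hBf r j hj, zero_mul])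
  show (Matrix.of fun r s : Fin (min k m) => (B * A * Bᵀ) (f r) (f s)).det
      = (Matrix.of fun r s : Fin (min k m) => (B * Bᵀ) (f r) (f s)).det
        * (Matrix.of fun r s : Fin (min k m) => A (f r) (f s)).det
  rw [hBAB, hBB]
  simp only [Matrix.det_mul, Matrix.det_transpose]
  ring

/-- For `B` lower triangular, the generalized power satisfies
`q_κ(B A Bᵀ) = q_κ(B Bᵀ) q_κ(A)`. -/
theorem gpow_congr_lowerTriangular {R : Type*} [CommRing R] {m : ℕ} (hm : 1 ≤ m)
    (κ : Fin m → ℕ) (hκ : Antitone κ)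
    (A B : Matrix (Fin m) (Fin m) R)
    (hB_lower : ∀ i j : Fin m, i < j → B i j = 0) :
    gpow κ (B * A * Bᵀ) = gpow κ (B * Bᵀ) * gpow κ A := by
  unfold gpow
  rw [← Finset.prod_mul_distrib]
  refine Finset.prod_congr rfl fun i _ => ?_
  rw [lpm_mul A B hB_lower, mul_pow]
end
end

section
/- Let m ≥ 1, let κ = (k_1,…,k_m) be integers with k_1 ≥ … ≥ k_m ≥ 0, let A be an invertible m×m matrix over a field, and let B be an invertible m×m lower-triangular matrix over the same field. Then the generalized power satisfies q_κ(B⁻¹ A (B⁻¹)ᵀ) = q_κ(A) / q_κ(B Bᵀ), i.e., q_κ(B⁻¹ A (Bᵀ)⁻¹) · q_κ(B Bᵀ) = q_κ(A). -/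
open Matrix Finset

noncomputable section

/-!
A leading principal submatrix of `L * M` with `L` lower triangular is the product of the
corresponding submatrices of `L` and `M`, because only the first `k` columns of the first `k`
rows of `L` are nonzero; transposing gives the same for `M * U` with `U` upper triangular.
So the `k`-th leading minor of `B⁻¹ A (B⁻¹)ᵀ` is `det((B⁻¹)_k)² det(A_k)`, that of `B Bᵀ` is
`det(B_k)²`, and `det((B⁻¹)_k) det(B_k) = det((B⁻¹ B)_k) = 1`. As `q_κ` is a product of powers
of leading minors, the claim follows factor by factor.
-/

namespace Matrix

variable {R : Type*} [CommSemiring R] {m : ℕ}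

theorem submatrix_castLE_mul_of_isLowerTriangular {k : ℕ} (hk : k ≤ m)
    {L : Matrix (Fin m) (Fin m) R} (hL : L.IsLowerTriangular) (M : Matrix (Fin m) (Fin m) R) :
    (L * M).submatrix (Fin.castLE hk) (Fin.castLE hk) =
      L.submatrix (Fin.castLE hk) (Fin.castLE hk) * M.submatrix (Fin.castLE hk) (Fin.castLE hk) := by
  ext r s
  refine (Fintype.sum_of_injective _ (Fin.castLE_injective hk) _ _ (fun p hp => ?_)
    fun _ => rfl).symm
  have hrp : Fin.castLE hk r < p := by
    by_contra! hpr
    exact hp ⟨⟨p, lt_of_le_of_lt hpr r.2⟩, rfl⟩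
  exact mul_eq_zero_of_left (hL hrp) _

theorem submatrix_castLE_mul_of_isUpperTriangular {k : ℕ} (hk : k ≤ m)
    (M : Matrix (Fin m) (Fin m) R) {U : Matrix (Fin m) (Fin m) R} (hU : U.IsUpperTriangular) :
    (M * U).submatrix (Fin.castLE hk) (Fin.castLE hk) =
      M.submatrix (Fin.castLE hk) (Fin.castLE hk) * U.submatrix (Fin.castLE hk) (Fin.castLE hk) := by
  rw [← transpose_inj, transpose_mul, transpose_submatrix, transpose_submatrix,
    transpose_submatrix, transpose_mul, submatrix_castLE_mul_of_isLowerTriangular hk hU.transpose]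

end Matrix

section LeadingMinors

variable {R : Type*} [CommRing R] {m : ℕ}

theorem lpm_eq_det_submatrix (A : Matrix (Fin m) (Fin m) R) (k : ℕ) :
    lpm A k = (A.submatrix (Fin.castLE (min_le_right k m)) (Fin.castLE (min_le_right k m))).det :=
  rfl

theorem lpm_transpose (A : Matrix (Fin m) (Fin m) R) (k : ℕ) : lpm Aᵀ k = lpm A k := by
  rw [lpm_eq_det_submatrix, lpm_eq_det_submatrix, ← transpose_submatrix, det_transpose]

theorem lpm_one (k : ℕ) : lpm (1 : Matrix (Fin m) (Fin m) R) k = 1 := by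
  rw [lpm_eq_det_submatrix, submatrix_one _ (Fin.castLE_injective _), det_one]

theorem lpm_mul_of_isLowerTriangular {L : Matrix (Fin m) (Fin m) R} (hL : L.IsLowerTriangular)
    (M : Matrix (Fin m) (Fin m) R) (k : ℕ) : lpm (L * M) k = lpm L k * lpm M k := by
  rw [lpm_eq_det_submatrix, submatrix_castLE_mul_of_isLowerTriangular _ hL, det_mul]; rfl

theorem lpm_mul_of_isUpperTriangular (M : Matrix (Fin m) (Fin m) R)
    {U : Matrix (Fin m) (Fin m) R} (hU : U.IsUpperTriangular) (k : ℕ) :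
    lpm (M * U) k = lpm M k * lpm U k := by
  rw [lpm_eq_det_submatrix, submatrix_castLE_mul_of_isUpperTriangular _ _ hU, det_mul]; rfl

theorem lpm_mul_mul_transpose_of_isLowerTriangular {L : Matrix (Fin m) (Fin m) R}
    (hL : L.IsLowerTriangular) (A : Matrix (Fin m) (Fin m) R) (k : ℕ) :
    lpm (L * A * Lᵀ) k = lpm L k ^ 2 * lpm A k := by
  rw [lpm_mul_of_isUpperTriangular _ hL.transpose, lpm_mul_of_isLowerTriangular hL,
    lpm_transpose]
  ring

theorem lpm_inv_mul_lpm_of_isLowerTriangular {L : Matrix (Fin m) (Fin m) R}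
    (hL : L.IsLowerTriangular) (hdet : IsUnit L.det) (k : ℕ) : lpm L⁻¹ k * lpm L k = 1 := by
  have : Invertible L := L.invertibleOfIsUnitDet hdet
  rw [← lpm_mul_of_isLowerTriangular (blockTriangular_inv_of_blockTriangular hL),
    nonsing_inv_mul L hdet, lpm_one]

end LeadingMinors

section GeneralizedPower

variable {R : Type*} [CommRing R] {m : ℕ}

theorem gpow_mul_gpow_of_lpm_mul_lpm {X Y Z : Matrix (Fin m) (Fin m) R}
    (h : ∀ k, lpm X k * lpm Y k = lpm Z k) (κ : Fin m → ℕ) :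
    gpow κ X * gpow κ Y = gpow κ Z := by
  simp only [gpow, ← prod_mul_distrib, ← mul_pow, h]

theorem isUnit_gpow_of_isUnit_lpm {X : Matrix (Fin m) (Fin m) R} (h : ∀ k, IsUnit (lpm X k))
    (κ : Fin m → ℕ) : IsUnit (gpow κ X) :=
  IsUnit.prod_univ_iff.mpr fun _ => (h _).pow _

end GeneralizedPower

theorem gpow_congr_inv_lowerTriangular_general {F : Type*} [Field F] {m : ℕ}
    (κ : Fin m → ℕ)
    (A B : Matrix (Fin m) (Fin m) F)
    (hB : IsUnit B.det)
    (hB_lower : ∀ i j : Fin m, i < j → B i j = 0) :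
    gpow κ (B⁻¹ * A * (B⁻¹)ᵀ) = gpow κ A / gpow κ (B * Bᵀ)
    ∧ gpow κ (B⁻¹ * A * (Bᵀ)⁻¹) * gpow κ (B * Bᵀ) = gpow κ A := by
  have hL : B.IsLowerTriangular := fun i j hij => hB_lower i j hij
  have hL_inv : B⁻¹.IsLowerTriangular :=
    have := B.invertibleOfIsUnitDet hB
    blockTriangular_inv_of_blockTriangular hL
  have hBBt : ∀ k, lpm (B * Bᵀ) k = lpm B k ^ 2 := fun k => by
    rw [lpm_mul_of_isUpperTriangular _ hL.transpose, lpm_transpose, sq]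
  have hmain : gpow κ (B⁻¹ * A * (B⁻¹)ᵀ) * gpow κ (B * Bᵀ) = gpow κ A := by
    refine gpow_mul_gpow_of_lpm_mul_lpm (fun k => ?_) κ
    rw [lpm_mul_mul_transpose_of_isLowerTriangular hL_inv, hBBt]
    linear_combination (lpm A k * (lpm B⁻¹ k * lpm B k + 1)) *
      lpm_inv_mul_lpm_of_isLowerTriangular hL hB k
  have hunit : IsUnit (gpow κ (B * Bᵀ)) := isUnit_gpow_of_isUnit_lpm (fun k => by
    rw [hBBt]
    exact (IsUnit.of_mul_eq_one_right _ (lpm_inv_mul_lpm_of_isLowerTriangular hL hB k)).pow 2) κ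
  refine ⟨eq_div_of_mul_eq hunit.ne_zero hmain, ?_⟩
  rwa [← transpose_nonsing_inv]

/-- For `B` invertible lower triangular and `A` invertible, the generalized power satisfies
`q_κ(B⁻¹ A (B⁻¹)ᵀ) = q_κ(A) / q_κ(B Bᵀ)`, i.e. `q_κ(B⁻¹ A (Bᵀ)⁻¹) q_κ(B Bᵀ) = q_κ(A)`. -/
theorem gpow_congr_inv_lowerTriangular {F : Type*} [Field F] {m : ℕ} (hm : 1 ≤ m)
    (κ : Fin m → ℕ) (hκ : Antitone κ)
    (A B : Matrix (Fin m) (Fin m) F)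
    (hA : IsUnit A.det) (hB : IsUnit B.det)
    (hB_lower : ∀ i j : Fin m, i < j → B i j = 0) :
    gpow κ (B⁻¹ * A * (B⁻¹)ᵀ) = gpow κ A / gpow κ (B * Bᵀ)
    ∧ gpow κ (B⁻¹ * A * (Bᵀ)⁻¹) * gpow κ (B * Bᵀ) = gpow κ A :=
  gpow_congr_inv_lowerTriangular_general κ A B hB hB_lower
end
end
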